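/- arXiv:1511.05412 — 2 statements merged into one kernel-verified Lean document; each statement's English description precedes it below -/
import Mathlib

section
/- In the Hecke-Clifford superalgebra H^c_{r,R}, the assignment T_i ↦ T_i - (q-1) c_i c_{i+1}, c_j ↦ c_j extends to an algebra anti-involution ι of H^c_{r,R}. -/
namespace HCPaper

noncomputable section

open MulOpposite

/-- Generators of the Hecke-Clifford superalgebra: `Sum.inl i` is `T_{i+1}` (0-based `i < r-1`),
`Sum.inr j` is `c_{j+1}` (0-based `j < r`). -/
abbrev Gen (r : ℕ) := (Fin (r - 1)) ⊕ (Fin r)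

/-- The index `i` viewed in `Fin r` (the first of the two indices moved by `T_i`). -/
def loIdx {r : ℕ} (i : Fin (r - 1)) : Fin r := ⟨i.val, by have := i.isLt; omega⟩

/-- The index `i+1` viewed in `Fin r`. -/
def hiIdx {r : ℕ} (i : Fin (r - 1)) : Fin r := ⟨i.val + 1, by have := i.isLt; omega⟩

def Tf (R : Type) [CommRing R] (r : ℕ) (i : Fin (r - 1)) : FreeAlgebra R (Gen r) :=
  FreeAlgebra.ι R (Sum.inl i)

def Cf (R : Type) [CommRing R] (r : ℕ) (j : Fin r) : FreeAlgebra R (Gen r) :=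
  FreeAlgebra.ι R (Sum.inr j)

/-- The defining relations of the Hecke-Clifford superalgebra `H^c_{r,R}`. -/
inductive HCRel (R : Type) [CommRing R] (q : R) (r : ℕ) :
    FreeAlgebra R (Gen r) → FreeAlgebra R (Gen r) → Prop
  | csq (j : Fin r) : HCRel R q r (Cf R r j * Cf R r j) (-1)
  | canti (i j : Fin r) (h : i ≠ j) :
      HCRel R q r (Cf R r i * Cf R r j) (-(Cf R r j * Cf R r i))
  | quad (i : Fin (r - 1)) :
      HCRel R q r ((Tf R r i - algebraMap R _ q) * (Tf R r i + 1)) 0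
  | commTT (i i' : Fin (r - 1)) (h : i.val + 1 < i'.val) :
      HCRel R q r (Tf R r i * Tf R r i') (Tf R r i' * Tf R r i)
  | braid (i i' : Fin (r - 1)) (h : i'.val = i.val + 1) :
      HCRel R q r (Tf R r i * Tf R r i' * Tf R r i) (Tf R r i' * Tf R r i * Tf R r i')
  | commTC (i : Fin (r - 1)) (j : Fin r) (h1 : j.val ≠ i.val) (h2 : j.val ≠ i.val + 1) :
      HCRel R q r (Tf R r i * Cf R r j) (Cf R r j * Tf R r i)
  | TClo (i : Fin (r - 1)) :
      HCRel R q r (Tf R r i * Cf R r (loIdx i)) (Cf R r (hiIdx i) * Tf R r i)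
  | TChi (i : Fin (r - 1)) :
      HCRel R q r (Tf R r i * Cf R r (hiIdx i))
        (Cf R r (loIdx i) * Tf R r i -
          algebraMap R _ (q - 1) * (Cf R r (loIdx i) - Cf R r (hiIdx i)))

/-- The Hecke-Clifford superalgebra `H^c_{r,R}` with parameter `q`, as a quotient of
the free algebra by the defining relations. -/
abbrev HC (R : Type) [CommRing R] (q : R) (r : ℕ) := RingQuot (HCRel R q r)

/-- The generator `T_{i+1}` of `H^c_{r,R}` (0-based index). -/
def TT (R : Type) [CommRing R] (q : R) (r : ℕ) (i : Fin (r - 1)) : HC R q r :=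
  RingQuot.mkAlgHom R (HCRel R q r) (Tf R r i)

/-- The generator `c_{j+1}` of `H^c_{r,R}` (0-based index). -/
def CC (R : Type) [CommRing R] (q : R) (r : ℕ) (j : Fin r) : HC R q r :=
  RingQuot.mkAlgHom R (HCRel R q r) (Cf R r j)

end

end HCPaper
namespace HCProof
open HCPaper MulOpposite

variable (R : Type) [CommRing R] (q : R) (r : ℕ)

theorem mkT (i : Fin (r-1)) : RingQuot.mkAlgHom R (HCRel R q r) (Tf R r i) = TT R q r i := rfl
theorem mkC (j : Fin r) : RingQuot.mkAlgHom R (HCRel R q r) (Cf R r j) = CC R q r j := rfl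

theorem csq (j : Fin r) : CC R q r j * CC R q r j = -1 := by
  have h := RingQuot.mkAlgHom_rel R (HCRel.csq (R := R) (q := q) (r := r) j)
  simpa only [map_mul, map_neg, map_one, mkC] using h

theorem canti {i j : Fin r} (h : i ≠ j) : CC R q r i * CC R q r j = -(CC R q r j * CC R q r i) := by
  have h2 := RingQuot.mkAlgHom_rel R (HCRel.canti (R := R) (q := q) (r := r) i j h)
  simpa only [map_mul, map_neg, mkC] using h2

theorem Tsq (i : Fin (r-1)) :
    TT R q r i * TT R q r i = (q-1) • TT R q r i + q • (1 : HC R q r) := by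
  have h := RingQuot.mkAlgHom_rel R (HCRel.quad (R := R) (q := q) (r := r) i)
  simp only [map_mul, map_sub, map_add, map_one, map_zero, AlgHom.commutes, mkT] at h
  rw [mul_add, mul_one, sub_mul] at h
  rw [Algebra.smul_def, Algebra.smul_def, map_sub, map_one, mul_one, sub_mul, one_mul]
  have e : TT R q r i * TT R q r i =
      (TT R q r i * TT R q r i - algebraMap R (HC R q r) q * TT R q r i
        + (TT R q r i - algebraMap R (HC R q r) q))
      + (algebraMap R (HC R q r) q * TT R q r i - TT R q r i + algebraMap R (HC R q r) q) := by
    abel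
  rw [e, h, zero_add]

theorem commTT {i i' : Fin (r-1)} (h : i.val + 1 < i'.val) :
    TT R q r i * TT R q r i' = TT R q r i' * TT R q r i := by
  have h2 := RingQuot.mkAlgHom_rel R (HCRel.commTT (R := R) (q := q) (r := r) i i' h)
  simpa only [map_mul, mkT] using h2

theorem braidT {i i' : Fin (r-1)} (h : i'.val = i.val + 1) :
    TT R q r i * TT R q r i' * TT R q r i = TT R q r i' * TT R q r i * TT R q r i' := by
  have h2 := RingQuot.mkAlgHom_rel R (HCRel.braid (R := R) (q := q) (r := r) i i' h)
  simpa only [map_mul, mkT] using h2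

theorem commTC {i : Fin (r-1)} {j : Fin r} (h1 : j.val ≠ i.val) (h2 : j.val ≠ i.val + 1) :
    TT R q r i * CC R q r j = CC R q r j * TT R q r i := by
  have h3 := RingQuot.mkAlgHom_rel R (HCRel.commTC (R := R) (q := q) (r := r) i j h1 h2)
  simpa only [map_mul, mkT, mkC] using h3

theorem TClo (i : Fin (r-1)) :
    TT R q r i * CC R q r (loIdx i) = CC R q r (hiIdx i) * TT R q r i := by
  have h := RingQuot.mkAlgHom_rel R (HCRel.TClo (R := R) (q := q) (r := r) i)
  simpa only [map_mul, mkT, mkC] using h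

theorem TChi (i : Fin (r-1)) :
    TT R q r i * CC R q r (hiIdx i) = CC R q r (loIdx i) * TT R q r i
      - (q-1) • CC R q r (loIdx i) + (q-1) • CC R q r (hiIdx i) := by
  have h := RingQuot.mkAlgHom_rel R (HCRel.TChi (R := R) (q := q) (r := r) i)
  simp only [map_mul, map_sub, AlgHom.commutes, mkT, mkC] at h
  rw [← map_sub, ← Algebra.smul_def, smul_sub] at h
  rw [h]; abel


theorem mule {α : Type*} [Semiring α] {a b c : α} (h : a * b = c) (x : α) :
    a * (b * x) = c * x := by rw [← mul_assoc, h]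

section Generic
variable {R : Type} [CommRing R] {A : Type} [Ring A] [Algebra R A] (q : R)

theorem quad_s' (T c1 c2 : A)
    (b1 : T * c1 = c2 * T)
    (b2 : T * c2 = c1 * T - (q-1) • c1 + (q-1) • c2)
    (b7 : T * T = (q-1) • T + q • 1)
    (e11 : c1 * c1 = -1) (e22 : c2 * c2 = -1) (e21 : c2 * c1 = -(c1 * c2)) :
    (T - (q-1) • (c1 * c2) + 1) * (T - (q-1) • (c1 * c2) - algebraMap R A q) = 0 := by
  simp only [Algebra.algebraMap_eq_smul_one, add_mul, mul_add, sub_mul, mul_sub,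
    smul_mul_assoc, mul_smul_comm, mul_assoc, one_mul, mul_one, smul_smul, smul_sub, smul_add,
    smul_neg, mul_neg, neg_mul, neg_neg,
    mule b1, mule b2, mule b7, mule e11, mule e22, mule e21, b1, b2, b7, e11, e22, e21]
  module

theorem braid_s' (T U c1 c2 c3 : A)
    (b1 : T * c1 = c2 * T)
    (b2 : T * c2 = c1 * T - (q-1) • c1 + (q-1) • c2)
    (b3 : T * c3 = c3 * T)
    (b4 : U * c1 = c1 * U)
    (b5 : U * c2 = c3 * U)
    (b6 : U * c3 = c2 * U - (q-1) • c2 + (q-1) • c3)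
    (b7 : T * T = (q-1) • T + q • 1)
    (b8 : U * U = (q-1) • U + q • 1)
    (b9 : ∀ x : A, U * (T * (U * x)) = T * (U * (T * x)))
    (b9' : U * (T * U) = T * (U * T))
    (e11 : c1 * c1 = -1) (e22 : c2 * c2 = -1) (e33 : c3 * c3 = -1)
    (e21 : c2 * c1 = -(c1 * c2)) (e31 : c3 * c1 = -(c1 * c3)) (e32 : c3 * c2 = -(c2 * c3)) :
    (T - (q-1) • (c1 * c2)) * ((U - (q-1) • (c2 * c3)) * (T - (q-1) • (c1 * c2))) =
    (U - (q-1) • (c2 * c3)) * ((T - (q-1) • (c1 * c2)) * (U - (q-1) • (c2 * c3))) := by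
  simp only [add_mul, mul_add, sub_mul, mul_sub,
    smul_mul_assoc, mul_smul_comm, mul_assoc, one_mul, mul_one, smul_smul, smul_sub, smul_add,
    smul_neg, mul_neg, neg_mul, neg_neg, neg_sub, neg_add,
    mule b1, mule b2, mule b3, mule b4, mule b5, mule b6, mule b7, mule b8, b9, b9',
    mule e11, mule e22, mule e33, mule e21, mule e31, mule e32,
    b1, b2, b3, b4, b5, b6, b7, b8, e11, e22, e33, e21, e31, e32]
  module

theorem comm_s' (T U c1 c2 c3 c4 : A)
    (b1 : T * c3 = c3 * T) (b2 : T * c4 = c4 * T)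
    (b3 : U * c1 = c1 * U) (b4 : U * c2 = c2 * U)
    (b5 : U * T = T * U)
    (e31 : c3 * c1 = -(c1 * c3)) (e32 : c3 * c2 = -(c2 * c3))
    (e41 : c4 * c1 = -(c1 * c4)) (e42 : c4 * c2 = -(c2 * c4)) :
    (U - (q-1) • (c3 * c4)) * (T - (q-1) • (c1 * c2)) =
    (T - (q-1) • (c1 * c2)) * (U - (q-1) • (c3 * c4)) := by
  simp only [add_mul, mul_add, sub_mul, mul_sub,
    smul_mul_assoc, mul_smul_comm, mul_assoc, one_mul, mul_one, smul_smul, smul_sub, smul_add,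
    smul_neg, mul_neg, neg_mul, neg_neg,
    mule b1, mule b2, mule b3, mule b4, mule b5, mule e31, mule e32, mule e41, mule e42,
    b1, b2, b3, b4, b5, e31, e32, e41, e42]
  module

theorem commCs' (T c1 c2 d : A)
    (b1 : T * d = d * T)
    (e1 : c1 * d = -(d * c1)) (e2 : c2 * d = -(d * c2)) :
    d * (T - (q-1) • (c1 * c2)) = (T - (q-1) • (c1 * c2)) * d := by
  simp only [mul_sub, sub_mul, smul_mul_assoc, mul_smul_comm, mul_assoc,
    smul_neg, mul_neg, neg_mul, neg_neg,
    mule b1, mule e1, mule e2, b1, e1, e2]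

theorem TClo_s' (T c1 c2 : A)
    (b1 : T * c1 = c2 * T)
    (b2 : T * c2 = c1 * T - (q-1) • c1 + (q-1) • c2)
    (e11 : c1 * c1 = -1) (e22 : c2 * c2 = -1) (e21 : c2 * c1 = -(c1 * c2)) :
    c1 * (T - (q-1) • (c1 * c2)) = (T - (q-1) • (c1 * c2)) * c2 := by
  simp only [mul_sub, sub_mul, add_mul, mul_add, smul_mul_assoc, mul_smul_comm, mul_assoc,
    smul_neg, mul_neg, neg_mul, neg_neg, smul_sub, smul_add, smul_smul, one_mul, mul_one,
    mule b1, mule b2, mule e11, mule e22, mule e21, b1, b2, e11, e22, e21]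
  module

theorem TChi_s' (T c1 c2 : A)
    (b1 : T * c1 = c2 * T)
    (b2 : T * c2 = c1 * T - (q-1) • c1 + (q-1) • c2)
    (e11 : c1 * c1 = -1) (e22 : c2 * c2 = -1) (e21 : c2 * c1 = -(c1 * c2)) :
    c2 * (T - (q-1) • (c1 * c2)) =
      (T - (q-1) • (c1 * c2)) * c1 - (q-1) • c1 + (q-1) • c2 := by
  simp only [mul_sub, sub_mul, add_mul, mul_add, smul_mul_assoc, mul_smul_comm, mul_assoc,
    smul_neg, mul_neg, neg_mul, neg_neg, smul_sub, smul_add, smul_smul, one_mul, mul_one,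
    mule b1, mule b2, mule e11, mule e22, mule e21, b1, b2, e11, e22, e21]
  module



end Generic

section Generic2
variable {R : Type} [CommRing R] {A : Type} [Ring A] [Algebra R A] (q : R)

theorem TChiR' (T c1 c2 : A)
    (b1 : T * c1 = c2 * T)
    (b2 : T * c2 = c1 * T - (q-1) • c1 + (q-1) • c2)
    (e11 : c1 * c1 = -1) (e22 : c2 * c2 = -1) (e21 : c2 * c1 = -(c1 * c2)) :
    c2 * (T - (q-1) • (c1 * c2)) =
      (T - (q-1) • (c1 * c2)) * c1 - (c1 - c2) * algebraMap R A (q-1) := by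
  simp only [Algebra.algebraMap_eq_smul_one, mul_sub, sub_mul, add_mul, mul_add,
    smul_mul_assoc, mul_smul_comm, mul_assoc,
    smul_neg, mul_neg, neg_mul, neg_neg, smul_sub, smul_add, smul_smul, one_mul, mul_one,
    mule b1, mule b2, mule e11, mule e22, mule e21, b1, b2, e11, e22, e21]
  module

theorem ssc' (T c1 c2 : A) (e21 : c2 * c1 = -(c1 * c2)) :
    T - (q-1) • (c1 * c2) - (q-1) • (c2 * c1) = T := by
  rw [e21]
  module

end Generic2

section Main
variable (R : Type) [CommRing R] (q : R) (r : ℕ)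

theorem fne {n : ℕ} {a b : Fin n} (h : a.val ≠ b.val) : a ≠ b :=
  fun e => h (congrArg Fin.val e)

theorem lo_ne_hi (i : Fin (r-1)) : loIdx i ≠ hiIdx i :=
  fne (show i.val ≠ i.val + 1 by omega)

/-- image of `T_i` under the anti-involution -/
def sGen (i : Fin (r-1)) : HC R q r :=
  TT R q r i - (q-1) • (CC R q r (loIdx i) * CC R q r (hiIdx i))

theorem quad_sHC (i : Fin (r-1)) :
    (sGen R q r i + 1) * (sGen R q r i - algebraMap R (HC R q r) q) = 0 :=
  quad_s' q _ _ _ (TClo R q r i) (TChi R q r i) (Tsq R q r i)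
    (csq R q r _) (csq R q r _) (canti R q r (lo_ne_hi r i).symm)

theorem comm_sHC {i i' : Fin (r-1)} (h : i.val + 1 < i'.val) :
    sGen R q r i' * sGen R q r i = sGen R q r i * sGen R q r i' :=
  comm_s' q _ _ _ _ _ _
    (commTC R q r (show (loIdx i').val ≠ i.val by show i'.val ≠ i.val; omega)
      (show (loIdx i').val ≠ i.val + 1 by show i'.val ≠ i.val + 1; omega))
    (commTC R q r (show (hiIdx i').val ≠ i.val by show i'.val + 1 ≠ i.val; omega)
      (show (hiIdx i').val ≠ i.val + 1 by show i'.val + 1 ≠ i.val + 1; omega))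
    (commTC R q r (show (loIdx i).val ≠ i'.val by show i.val ≠ i'.val; omega)
      (show (loIdx i).val ≠ i'.val + 1 by show i.val ≠ i'.val + 1; omega))
    (commTC R q r (show (hiIdx i).val ≠ i'.val by show i.val + 1 ≠ i'.val; omega)
      (show (hiIdx i).val ≠ i'.val + 1 by show i.val + 1 ≠ i'.val + 1; omega))
    (commTT R q r h).symm
    (canti R q r (fne (show i'.val ≠ i.val by omega)))
    (canti R q r (fne (show i'.val ≠ i.val + 1 by omega)))
    (canti R q r (fne (show i'.val + 1 ≠ i.val by omega)))
    (canti R q r (fne (show i'.val + 1 ≠ i.val + 1 by omega)))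

theorem braid_sHC {i i' : Fin (r-1)} (h : i'.val = i.val + 1) :
    sGen R q r i * (sGen R q r i' * sGen R q r i) =
    sGen R q r i' * (sGen R q r i * sGen R q r i') := by
  have hid : loIdx i' = hiIdx i := by
    apply Fin.ext; show i'.val = i.val + 1; omega
  have b5 : TT R q r i' * CC R q r (hiIdx i) = CC R q r (hiIdx i') * TT R q r i' := by
    have := TClo R q r i'; rwa [hid] at this
  have b6 := TChi R q r i'
  rw [hid] at b6
  have b9' : TT R q r i' * (TT R q r i * TT R q r i') =
      TT R q r i * (TT R q r i' * TT R q r i) := by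
    rw [← mul_assoc, ← mul_assoc]
    exact (braidT R q r h).symm
  have hs' : sGen R q r i' =
      TT R q r i' - (q-1) • (CC R q r (hiIdx i) * CC R q r (hiIdx i')) := by
    rw [sGen, hid]
  rw [hs']
  exact braid_s' q _ _ _ _ _
    (TClo R q r i)
    (TChi R q r i)
    (commTC R q r (show (hiIdx i').val ≠ i.val by show i'.val + 1 ≠ i.val; omega)
      (show (hiIdx i').val ≠ i.val + 1 by show i'.val + 1 ≠ i.val + 1; omega))
    (commTC R q r (show (loIdx i).val ≠ i'.val by show i.val ≠ i'.val; omega)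
      (show (loIdx i).val ≠ i'.val + 1 by show i.val ≠ i'.val + 1; omega))
    b5 b6 (Tsq R q r i) (Tsq R q r i')
    (fun x => by simp only [← mul_assoc]; rw [← braidT R q r h])
    b9'
    (csq R q r _) (csq R q r _) (csq R q r _)
    (canti R q r (lo_ne_hi r i).symm)
    (canti R q r (fne (show i'.val + 1 ≠ i.val by omega)))
    (canti R q r (fne (show i'.val + 1 ≠ i.val + 1 by omega)))

theorem commCs_HC {i : Fin (r-1)} {j : Fin r} (h1 : j.val ≠ i.val) (h2 : j.val ≠ i.val + 1) :
    CC R q r j * sGen R q r i = sGen R q r i * CC R q r j :=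
  commCs' q _ _ _ _ (commTC R q r h1 h2)
    (canti R q r (fne (show i.val ≠ j.val from Ne.symm h1)))
    (canti R q r (fne (show i.val + 1 ≠ j.val from Ne.symm h2)))

theorem TClo_sHC (i : Fin (r-1)) :
    CC R q r (loIdx i) * sGen R q r i = sGen R q r i * CC R q r (hiIdx i) :=
  TClo_s' q _ _ _ (TClo R q r i) (TChi R q r i)
    (csq R q r _) (csq R q r _) (canti R q r (lo_ne_hi r i).symm)

theorem TChiR_HC (i : Fin (r-1)) :
    CC R q r (hiIdx i) * sGen R q r i =
      sGen R q r i * CC R q r (loIdx i) -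
        (CC R q r (loIdx i) - CC R q r (hiIdx i)) * algebraMap R (HC R q r) (q-1) :=
  TChiR' q _ _ _ (TClo R q r i) (TChi R q r i)
    (csq R q r _) (csq R q r _) (canti R q r (lo_ne_hi r i).symm)

/-- where generators go under the anti-involution, landing in the opposite algebra -/
def genMap : Gen r → (HC R q r)ᵐᵒᵖ
  | Sum.inl i => op (sGen R q r i)
  | Sum.inr j => op (CC R q r j)

theorem rel_pres : ∀ ⦃x y : FreeAlgebra R (Gen r)⦄, HCRel R q r x y →
    FreeAlgebra.lift R (genMap R q r) x = FreeAlgebra.lift R (genMap R q r) y := by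
  intro x y hrel
  cases hrel with
  | csq j =>
    simp only [map_mul, map_neg, map_one, Cf, FreeAlgebra.lift_ι_apply, genMap,
      ← op_mul, ← op_one, ← op_neg]
    exact congrArg op (csq R q r j)
  | canti i j h =>
    simp only [map_mul, map_neg, Cf, FreeAlgebra.lift_ι_apply, genMap, ← op_mul, ← op_neg]
    exact congrArg op (canti R q r h.symm)
  | quad i =>
    simp only [map_mul, map_sub, map_add, map_one, map_zero, AlgHom.commutes,
      Tf, FreeAlgebra.lift_ι_apply, genMap, MulOpposite.algebraMap_apply,
      ← op_mul, ← op_one, ← op_add, ← op_sub, ← op_zero]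
    exact congrArg op (quad_sHC R q r i)
  | commTT i i' h =>
    simp only [map_mul, Tf, FreeAlgebra.lift_ι_apply, genMap, ← op_mul]
    exact congrArg op (comm_sHC R q r h)
  | braid i i' h =>
    simp only [map_mul, Tf, FreeAlgebra.lift_ι_apply, genMap, ← op_mul]
    exact congrArg op (braid_sHC R q r h)
  | commTC i j h1 h2 =>
    simp only [map_mul, Tf, Cf, FreeAlgebra.lift_ι_apply, genMap, ← op_mul]
    exact congrArg op (commCs_HC R q r h1 h2)
  | TClo i =>
    simp only [map_mul, Tf, Cf, FreeAlgebra.lift_ι_apply, genMap, ← op_mul]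
    exact congrArg op (TClo_sHC R q r i)
  | TChi i =>
    simp only [map_mul, map_sub, AlgHom.commutes, Tf, Cf, FreeAlgebra.lift_ι_apply, genMap,
      MulOpposite.algebraMap_apply, ← op_mul, ← op_sub]
    rw [← map_sub]
    exact congrArg op (TChiR_HC R q r i)

/-- the anti-involution as an algebra map to the opposite algebra -/
noncomputable def psi : HC R q r →ₐ[R] (HC R q r)ᵐᵒᵖ :=
  RingQuot.liftAlgHom R ⟨FreeAlgebra.lift R (genMap R q r), rel_pres R q r⟩

theorem psi_T (i : Fin (r-1)) : psi R q r (TT R q r i) = op (sGen R q r i) := by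
  rw [psi, TT, RingQuot.liftAlgHom_mkAlgHom_apply, Tf, FreeAlgebra.lift_ι_apply]
  rfl

theorem psi_C (j : Fin r) : psi R q r (CC R q r j) = op (CC R q r j) := by
  conv_lhs => rw [psi, CC, RingQuot.liftAlgHom_mkAlgHom_apply, Cf, FreeAlgebra.lift_ι_apply]
  rfl

theorem psi_s (i : Fin (r-1)) : psi R q r (sGen R q r i) = op (TT R q r i) := by
  rw [sGen, map_sub, map_smul, map_mul, psi_T, psi_C, psi_C, ← op_mul, ← op_smul, ← op_sub]
  exact congrArg op (ssc' q _ _ _ (canti R q r (lo_ne_hi r i).symm))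

/-- the inverse direction as an algebra map -/
noncomputable def psi' : (HC R q r)ᵐᵒᵖ →ₐ[R] HC R q r :=
  ((AlgEquiv.opOp R (HC R q r)).symm.toAlgHom).comp (AlgHom.op (psi R q r))

theorem psi'_op (x : HC R q r) : psi' R q r (op x) = unop (psi R q r x) := rfl

theorem key : ∀ x : HC R q r, unop (psi R q r (unop (psi R q r x))) = x := by
  have h : (psi' R q r).comp (psi R q r) = AlgHom.id R (HC R q r) := by
    apply RingQuot.ringQuot_ext'
    apply FreeAlgebra.hom_ext
    funext g
    match g with
    | Sum.inl i =>
      show psi' R q r (psi R q r (TT R q r i)) = TT R q r i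
      rw [psi_T, psi'_op, psi_s, unop_op]
    | Sum.inr j =>
      show psi' R q r (psi R q r (CC R q r j)) = CC R q r j
      rw [psi_C, psi'_op, psi_C, unop_op]
  intro x
  have hx := congrArg (fun f => f x) (congrArg (fun (f : HC R q r →ₐ[R] HC R q r) => ⇑f) h)
  simp only [AlgHom.coe_comp, Function.comp_apply, AlgHom.coe_id, id_eq] at hx
  calc unop (psi R q r (unop (psi R q r x)))
      = psi' R q r (op (unop (psi R q r x))) := (psi'_op R q r _).symm
    _ = psi' R q r (psi R q r x) := by rw [op_unop]
    _ = x := hx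

end Main
end HCProof

open HCPaper in
/-- The assignment `T_i ↦ T_i - (q-1) c_i c_{i+1}`, `c_j ↦ c_j` extends to an algebra
anti-involution `ι` of the Hecke-Clifford superalgebra `H^c_{r,R}`. -/
theorem stmt3 (R : Type) [CommRing R] (h2 : ringChar R ≠ 2) (q : R) (r : ℕ) :
    ∃ io : HC R q r →ₗ[R] HC R q r,
      (∀ x y : HC R q r, io (x * y) = io y * io x) ∧
      io 1 = 1 ∧
      (∀ x : HC R q r, io (io x) = x) ∧
      (∀ i : Fin (r - 1),
        io (TT R q r i) = TT R q r i -
          algebraMap R (HC R q r) (q - 1) * (CC R q r (loIdx i) * CC R q r (hiIdx i))) ∧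
      (∀ j : Fin r, io (CC R q r j) = CC R q r j) := by
  refine ⟨{ toFun := fun x => MulOpposite.unop (HCProof.psi R q r x),
            map_add' := by intro x y; show MulOpposite.unop (HCProof.psi R q r (x + y)) = MulOpposite.unop (HCProof.psi R q r x) + MulOpposite.unop (HCProof.psi R q r y); rw [map_add, MulOpposite.unop_add],
            map_smul' := by intro c x; simp [map_smul] },
    ?_, ?_, ?_, ?_, ?_⟩
  · intro x y
    show MulOpposite.unop (HCProof.psi R q r (x * y)) =
      MulOpposite.unop (HCProof.psi R q r y) * MulOpposite.unop (HCProof.psi R q r x)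
    rw [map_mul, MulOpposite.unop_mul]
  · show MulOpposite.unop (HCProof.psi R q r 1) = 1
    rw [map_one, MulOpposite.unop_one]
  · intro x
    exact HCProof.key R q r x
  · intro i
    show MulOpposite.unop (HCProof.psi R q r (TT R q r i)) = _
    rw [HCProof.psi_T, MulOpposite.unop_op, HCProof.sGen, Algebra.smul_def]
  · intro j
    show MulOpposite.unop (HCProof.psi R q r (CC R q r j)) = CC R q r j
    rw [HCProof.psi_C, MulOpposite.unop_op]
end

section
/- The map M ↦ (ro(M), d_M, co(M)) defines a bijection from the set of n×n matrices with nonnegative integer entries summing to r onto the set of triples (λ, d, μ) with λ, μ compositions of r into n parts and d a minimal length (S_λ, S_μ)-double coset representative in S_r, where d_M is the unique such representative with |R_i^{ro(M)} ∩ d_M(R_j^{co(M)})| = m_{ij} for all i, j. -/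
namespace HCPaper

/-- The Coxeter length of a permutation of `Fin r`: its number of inversions. -/
def len {r : ℕ} (w : Equiv.Perm (Fin r)) : ℕ :=
  (Finset.univ.filter fun p : Fin r × Fin r => p.1 < p.2 ∧ w p.2 < w p.1).card

/-- The simple transposition `s_{k+1} = (k+1, k+2)` (0-based `k < r-1`) as a permutation. -/
def simpleT {r : ℕ} (k : Fin (r - 1)) : Equiv.Perm (Fin r) :=
  Equiv.swap (loIdx k) (hiIdx k)

/-- Partial sum `λ_1 + ⋯ + λ_k` of a composition. -/
def psum {n : ℕ} (lam : Fin n → ℕ) (k : ℕ) : ℕ :=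
  ∑ i : Fin n, if (i : ℕ) < k then lam i else 0

/-- `j` (0-based) lies in the `k`-th block `R^λ_{k+1}` of the composition `λ`. -/
def InBlock {n r : ℕ} (lam : Fin n → ℕ) (k : Fin n) (j : Fin r) : Prop :=
  psum lam (k : ℕ) ≤ (j : ℕ) ∧ (j : ℕ) < psum lam (k : ℕ) + lam k

instance {n r : ℕ} (lam : Fin n → ℕ) (k : Fin n) (j : Fin r) : Decidable (InBlock lam k j) := by
  unfold InBlock; infer_instance

/-- Membership in the Young subgroup `S_λ`: `w` preserves each block of `λ`. -/
def MemYoung {n r : ℕ} (lam : Fin n → ℕ) (w : Equiv.Perm (Fin r)) : Prop :=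
  ∀ (k : Fin n) (j : Fin r), InBlock lam k j → InBlock lam k (w j)

instance {n r : ℕ} (lam : Fin n → ℕ) (w : Equiv.Perm (Fin r)) : Decidable (MemYoung lam w) := by
  unfold MemYoung; infer_instance

/-- `d` is the minimal length element of the double coset `S_λ d S_μ`. -/
def MinDouble {r n1 n2 : ℕ} (lam : Fin n1 → ℕ) (mu : Fin n2 → ℕ) (d : Equiv.Perm (Fin r)) :
    Prop :=
  ∀ u σ : Equiv.Perm (Fin r), MemYoung lam u → MemYoung mu σ → len d ≤ len (u * d * σ)

end HCPaper

namespace HCPaper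

/-- Row sums of a matrix. -/
def rowSums {n : ℕ} (M : Fin n → Fin n → ℕ) (i : Fin n) : ℕ := ∑ j, M i j

/-- Column sums of a matrix. -/
def colSums {n : ℕ} (M : Fin n → Fin n → ℕ) (j : Fin n) : ℕ := ∑ i, M i j

/-- `|R_i^{ro(M)} ∩ d(R_j^{co(M)})| = M i j` for all `i, j`. -/
def MatchMat {n r : ℕ} (M : Fin n → Fin n → ℕ) (d : Equiv.Perm (Fin r)) : Prop :=
  ∀ i j : Fin n,
    (Finset.univ.filter fun x : Fin r =>
        InBlock (rowSums M) i x ∧ InBlock (colSums M) j (d⁻¹ x)).card = M i j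

end HCPaper

theorem Equiv.Perm.apply_inv_self {α : Type*} (f : Equiv.Perm α) (x : α) : f (f⁻¹ x) = x :=
  Equiv.apply_symm_apply f x

theorem Equiv.Perm.inv_apply_self {α : Type*} (f : Equiv.Perm α) (x : α) : f⁻¹ (f x) = x :=
  Equiv.symm_apply_apply f x

namespace HCPaper

open Finset

section Aux
variable {n r : ℕ}

/-! ### partial sums and blocks -/

lemma psum_mono (f : Fin n → ℕ) {k k' : ℕ} (h : k ≤ k') : psum f k ≤ psum f k' := by
  apply Finset.sum_le_sum
  intro i _
  by_cases h1 : (i : ℕ) < k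
  · rw [if_pos h1, if_pos (lt_of_lt_of_le h1 h)]
  · rw [if_neg h1]; exact Nat.zero_le _

lemma psum_succ (f : Fin n → ℕ) (k : Fin n) :
    psum f (k.val + 1) = psum f k.val + f k := by
  unfold psum
  have : ∀ i : Fin n, (if (i : ℕ) < k.val + 1 then f i else 0) =
      (if (i : ℕ) < k.val then f i else 0) + (if i = k then f i else 0) := by
    intro i
    by_cases h1 : i = k
    · subst h1; simp
    · have h2 : (i : ℕ) ≠ k.val := fun hc => h1 (Fin.ext hc)
      by_cases h3 : (i : ℕ) < k.val
      · rw [if_pos (by omega), if_pos h3, if_neg h1, add_zero]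
      · rw [if_neg (by omega), if_neg h3, if_neg h1, add_zero]
  rw [Finset.sum_congr rfl (fun i _ => this i), Finset.sum_add_distrib,
    Finset.sum_ite_eq' Finset.univ k f, if_pos (Finset.mem_univ k)]

lemma psum_le_sum (f : Fin n → ℕ) (k : ℕ) : psum f k ≤ ∑ i, f i := by
  apply Finset.sum_le_sum
  intro i _
  by_cases h1 : (i : ℕ) < k
  · rw [if_pos h1]
  · rw [if_neg h1]; exact Nat.zero_le _

lemma psum_add_le (f : Fin n → ℕ) (k : Fin n) : psum f k.val + f k ≤ ∑ i, f i := by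
  rw [← psum_succ]; exact psum_le_sum f _

lemma block_unique {f : Fin n → ℕ} {k k' : Fin n} {x : Fin r}
    (h : InBlock f k x) (h' : InBlock f k' x) : k = k' := by
  obtain ⟨h1, h2⟩ := h
  obtain ⟨h1', h2'⟩ := h'
  by_contra hne
  rcases Nat.lt_or_ge k.val k'.val with hlt | hge
  · have : psum f (k.val + 1) ≤ psum f k'.val := psum_mono f hlt
    rw [psum_succ] at this; omega
  · have hlt : k'.val < k.val := by
      rcases Nat.lt_or_ge k'.val k.val with h | h
      · exact h
      · exact absurd (Fin.ext (le_antisymm hge h)) (fun hc => hne hc.symm)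
    have : psum f (k'.val + 1) ≤ psum f k.val := psum_mono f hlt
    rw [psum_succ] at this; omega

/-- the generic decomposition lemma over ℕ -/
lemma blockN {f : Fin n → ℕ} {o : ℕ} (ho : o < ∑ i, f i) :
    ∃ (k : Fin n) (t : ℕ), t < f k ∧ o = psum f k.val + t := by
  have hn : 0 < n := by
    by_contra h
    have : n = 0 := by omega
    subst this
    simp at ho
  have hsumtop : psum f n = ∑ i, f i := by
    unfold psum
    exact Finset.sum_congr rfl (fun i _ => if_pos i.isLt)
  have hK : ((Finset.univ : Finset (Fin n)).filter
      (fun k => o < psum f (k.val + 1))).Nonempty := by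
    refine ⟨⟨n - 1, by omega⟩, Finset.mem_filter.mpr ⟨Finset.mem_univ _, ?_⟩⟩
    have h1 : psum f n ≤ psum f ((n-1) + 1) := psum_mono f (by omega)
    simp only []
    omega
  obtain ⟨k0, hk0⟩ := hK
  rw [Finset.mem_filter] at hk0
  suffices h : ∀ kv : ℕ, ∀ hkv : kv < n, o < psum f (kv + 1) →
      ∃ (k : Fin n) (t : ℕ), t < f k ∧ o = psum f k.val + t by
    exact h k0.val k0.isLt hk0.2
  intro kv
  induction kv using Nat.strong_induction_on with
  | _ kv IH =>
    intro hkv hk2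
    rcases Nat.lt_or_ge o (psum f kv) with hlt | hge
    · have hk0 : 0 < kv := by
        by_contra h0
        have : kv = 0 := by omega
        rw [this] at hlt
        unfold psum at hlt
        simp at hlt
      refine IH (kv - 1) (by omega) (by omega) ?_
      have : kv - 1 + 1 = kv := by omega
      rw [this]
      exact hlt
    · refine ⟨⟨kv, hkv⟩, o - psum f kv, ?_, ?_⟩ <;>
      · have h2 := psum_succ f ⟨kv, hkv⟩
        simp only [Fin.val_mk] at h2 ⊢
        omega

lemma block_exists {f : Fin n → ℕ} (hs : ∑ i, f i = r) (x : Fin r) :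
    ∃ k : Fin n, InBlock f k x := by
  obtain ⟨k, t, ht, hx⟩ := blockN (f := f) (o := x.val) (by omega)
  exact ⟨k, by constructor <;> omega⟩

lemma inBlock_of_val {f : Fin n → ℕ} {k : Fin n} {x : Fin r} {t : ℕ}
    (ht : t < f k) (hx : x.val = psum f k.val + t) : InBlock f k x := by
  constructor <;> omega

lemma posInj (f : Fin n → ℕ) {i i' : Fin n} {t t' : ℕ}
    (ht : t < f i) (ht' : t' < f i')
    (h : psum f i.val + t = psum f i'.val + t') : i = i' ∧ t = t' := by
  rcases lt_trichotomy i.val i'.val with hlt | heq | hgt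
  · have := psum_mono f (show i.val + 1 ≤ i'.val from hlt)
    rw [psum_succ] at this; omega
  · have : i = i' := Fin.ext heq
    subst this
    exact ⟨rfl, by omega⟩
  · have := psum_mono f (show i'.val + 1 ≤ i.val from hgt)
    rw [psum_succ] at this; omega

lemma posKey (f : Fin n → ℕ) {i i' : Fin n} {t t' : ℕ}
    (ht : t < f i) (ht' : t' < f i')
    (h : psum f i.val + t < psum f i'.val + t') :
    i.val < i'.val ∨ (i = i' ∧ t < t') := by
  rcases lt_trichotomy i.val i'.val with hlt | heq | hgt
  · exact Or.inl hlt
  · have : i = i' := Fin.ext heq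
    subst this
    exact Or.inr ⟨rfl, by omega⟩
  · have := psum_mono f (show i'.val + 1 ≤ i.val from hgt)
    rw [psum_succ] at this; omega

/-! ### cardinality helpers -/

lemma card_val_interval {m : ℕ} (s e : ℕ) (he : e ≤ m) :
    ((Finset.univ : Finset (Fin m)).filter (fun z => s ≤ z.val ∧ z.val < e)).card = e - s := by
  rw [← Nat.card_Ico s e]
  apply Finset.card_nbij (i := fun z => z.val)
  · intro a ha
    rw [Finset.mem_coe, Finset.mem_filter] at ha
    rw [Finset.mem_coe, Finset.mem_Ico]
    exact ha.2
  · intro a _ b _ hab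
    exact Fin.ext hab
  · intro b hb
    rw [Finset.coe_Ico, Set.mem_Ico] at hb
    refine ⟨⟨b, by omega⟩, ?_, rfl⟩
    simp only [Finset.coe_filter, Set.mem_setOf_eq]
    exact ⟨Finset.mem_univ _, by omega⟩

lemma card_val_lt {m : ℕ} (c : ℕ) (hc : c ≤ m) :
    ((Finset.univ : Finset (Fin m)).filter (fun z => z.val < c)).card = c := by
  have := card_val_interval (m := m) 0 c hc
  simpa using this

/-- counting a filter by partitioning along a second (unique-choice) predicate family -/
lemma card_filter_parts {α : Type*} (s : Finset α) (Q : α → Prop) (R : Fin n → α → Prop)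
    [DecidablePred Q] [∀ i, DecidablePred (R i)]
    (h : ∀ x ∈ s, Q x → ∃! i, R i x) :
    (s.filter Q).card = ∑ i, (s.filter (fun x => Q x ∧ R i x)).card := by
  simp only [Finset.card_filter]
  rw [Finset.sum_comm]
  apply Finset.sum_congr rfl
  intro x hx
  by_cases hq : Q x
  · rw [if_pos hq]
    obtain ⟨i₀, hi₀, huniq⟩ := h x hx hq
    have : ∀ i : Fin n, (if Q x ∧ R i x then 1 else 0) = if i = i₀ then 1 else 0 := by
      intro i
      by_cases hi : i = i₀
      · subst hi; rw [if_pos ⟨hq, hi₀⟩, if_pos rfl]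
      · rw [if_neg (fun hc => hi (huniq i hc.2)), if_neg hi]
    rw [Finset.sum_congr rfl (fun i _ => this i), Finset.sum_ite_eq' Finset.univ i₀ (fun _ => 1),
      if_pos (Finset.mem_univ i₀)]
  · rw [if_neg hq]
    rw [Finset.sum_eq_zero]
    intro i _
    rw [if_neg (fun hc => hq hc.1)]

/-- transport a count along a permutation -/
lemma card_filter_perm {m : ℕ} (w : Equiv.Perm (Fin m)) (P Q : Fin m → Prop)
    [DecidablePred P] [DecidablePred Q] :
    ((Finset.univ : Finset (Fin m)).filter (fun x => P x ∧ Q (w⁻¹ x))).card =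
    ((Finset.univ : Finset (Fin m)).filter (fun z => Q z ∧ P (w z))).card := by
  apply Finset.card_nbij (i := fun x => w⁻¹ x)
  · intro a ha
    rw [Finset.mem_coe, Finset.mem_filter] at ha ⊢
    refine ⟨Finset.mem_univ _, ha.2.2, ?_⟩
    show P (w (w⁻¹ a))
    rw [Equiv.Perm.apply_inv_self]
    exact ha.2.1
  · intro a _ b _ hab
    exact (Equiv.injective w⁻¹) hab
  · intro b hb
    simp only [Finset.coe_filter, Set.mem_setOf_eq] at hb ⊢
    refine ⟨w b, ⟨Finset.mem_univ _, ?_, ?_⟩, ?_⟩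
    · exact hb.2.2
    · show Q (w⁻¹ (w b))
      rw [Equiv.Perm.inv_apply_self]; exact hb.2.1
    · show w⁻¹ (w b) = b
      rw [Equiv.Perm.inv_apply_self]

end Aux
end HCPaper

namespace HCPaper

section Len
variable {r : ℕ}

lemma len_def (w : Equiv.Perm (Fin r)) :
    len w = (Finset.univ.filter fun p : Fin r × Fin r => p.1 < p.2 ∧ w p.2 < w p.1).card := rfl

lemma len_inv (w : Equiv.Perm (Fin r)) : len w⁻¹ = len w := by
  rw [len_def, len_def]
  apply Finset.card_nbij' (i := fun p => (w⁻¹ p.2, w⁻¹ p.1)) (j := fun q => (w q.2, w q.1))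
  · intro p hp
    rw [Finset.mem_coe, Finset.mem_filter] at hp ⊢
    obtain ⟨-, h1, h2⟩ := hp
    refine ⟨Finset.mem_univ _, h2, ?_⟩
    show w (w⁻¹ p.1) < w (w⁻¹ p.2)
    rw [Equiv.Perm.apply_inv_self, Equiv.Perm.apply_inv_self]
    exact h1
  · intro q hq
    rw [Finset.mem_coe, Finset.mem_filter] at hq ⊢
    obtain ⟨-, h1, h2⟩ := hq
    refine ⟨Finset.mem_univ _, h2, ?_⟩
    show w⁻¹ (w q.1) < w⁻¹ (w q.2)
    rw [Equiv.Perm.inv_apply_self, Equiv.Perm.inv_apply_self]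
    exact h1
  · intro p _
    show (w (w⁻¹ p.1), w (w⁻¹ p.2)) = p
    rw [Equiv.Perm.apply_inv_self, Equiv.Perm.apply_inv_self]
  · intro q _
    show (w⁻¹ (w q.1), w⁻¹ (w q.2)) = q
    rw [Equiv.Perm.inv_apply_self, Equiv.Perm.inv_apply_self]

/-- the adjacent swap reverses the order of a pair iff the pair is `(a, a')` -/
lemma swap_lt {a a' : Fin r} (h : a.val + 1 = a'.val) {p q : Fin r}
    (hpq : p < q) (hne : ¬(p = a ∧ q = a')) :
    Equiv.swap a a' p < Equiv.swap a a' q := by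
  have ha : a ≠ a' := fun hc => by rw [hc] at h; omega
  rw [Fin.lt_def] at hpq ⊢
  rw [Equiv.swap_apply_def, Equiv.swap_apply_def]
  rcases eq_or_ne p a with hpa | hpa <;> rcases eq_or_ne q a with hqa | hqa <;>
    rcases eq_or_ne p a' with hpa' | hpa' <;> rcases eq_or_ne q a' with hqa' | hqa' <;>
    simp_all <;>
    first
      | omega
      | (try subst hpa) <;> (try subst hqa) <;> (try subst hpa') <;> (try subst hqa') <;>
        simp_all [Fin.ext_iff] <;> omega

lemma len_mul_swap_asc (w : Equiv.Perm (Fin r)) {a a' : Fin r} (h : a.val + 1 = a'.val)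
    (hw : w a < w a') : len (w * Equiv.swap a a') = len w + 1 := by
  have haa : a < a' := by rw [Fin.lt_def]; omega
  set s := Equiv.swap a a' with hs
  have hss : ∀ x, s (s x) = x := fun x => Equiv.swap_apply_self a a' x
  have hmem : (a, a') ∈ Finset.univ.filter
      (fun p : Fin r × Fin r => p.1 < p.2 ∧ (w * s) p.2 < (w * s) p.1) := by
    rw [Finset.mem_filter]
    refine ⟨Finset.mem_univ _, haa, ?_⟩
    show w (s a') < w (s a)
    rw [hs, Equiv.swap_apply_left, Equiv.swap_apply_right]
    exact hw
  rw [len_def, len_def]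
  rw [← Finset.card_erase_add_one hmem]
  congr 1
  apply Finset.card_nbij' (i := fun p => (s p.1, s p.2)) (j := fun q => (s q.1, s q.2))
  · intro p hp
    rw [Finset.mem_coe, Finset.mem_erase, Finset.mem_filter] at hp
    obtain ⟨hne, -, h1, h2⟩ := hp
    rw [Finset.mem_coe, Finset.mem_filter]
    have hne' : ¬(p.1 = a ∧ p.2 = a') := by
      intro ⟨e1, e2⟩
      exact hne (Prod.ext e1 e2)
    refine ⟨Finset.mem_univ _, swap_lt h h1 hne', ?_⟩
    show w ((s p.1, s p.2).2) < w ((s p.1, s p.2).1)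
    exact h2
  · intro q hq
    rw [Finset.mem_coe, Finset.mem_filter] at hq
    obtain ⟨-, h1, h2⟩ := hq
    rw [Finset.mem_coe, Finset.mem_erase, Finset.mem_filter]
    have hne' : ¬(q.1 = a ∧ q.2 = a') := by
      intro ⟨e1, e2⟩
      rw [e1, e2] at h2
      exact absurd hw (not_lt.mpr (le_of_lt h2))
    refine ⟨?_, Finset.mem_univ _, swap_lt h h1 hne', ?_⟩
    · intro hc
      have hc1 : s q.1 = a := congrArg Prod.fst hc
      have hc2 : s q.2 = a' := congrArg Prod.snd hc
      have ha1 : q.1 = a' := by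
        have h3 := congrArg s hc1.symm
        rw [hss] at h3
        rw [← h3, hs, Equiv.swap_apply_left]
      have ha2 : q.2 = a := by
        have h3 := congrArg s hc2.symm
        rw [hss] at h3
        rw [← h3, hs, Equiv.swap_apply_right]
      rw [ha1, ha2] at h1
      rw [Fin.lt_def] at h1
      omega
    · show w (s ((s q.1, s q.2).2)) < w (s ((s q.1, s q.2).1))
      show w (s (s q.2)) < w (s (s q.1))
      rw [hss, hss]
      exact h2
  · intro p _
    show (s (s p.1), s (s p.2)) = p
    rw [hss, hss]
  · intro q _
    show (s (s q.1), s (s q.2)) = q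
    rw [hss, hss]

lemma len_mul_swap_desc (w : Equiv.Perm (Fin r)) {a a' : Fin r} (h : a.val + 1 = a'.val)
    (hw : w a' < w a) : len (w * Equiv.swap a a') + 1 = len w := by
  set s := Equiv.swap a a' with hs
  have key : len ((w * s) * s) = len (w * s) + 1 := by
    apply len_mul_swap_asc _ h
    show w (s a) < w (s a')
    rw [hs, Equiv.swap_apply_left, Equiv.swap_apply_right]
    exact hw
  have : (w * s) * s = w := by
    rw [mul_assoc, hs, Equiv.swap_mul_self, mul_one]
  rw [this] at key
  omega

end Len
end HCPaper

namespace HCPaper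

section MinD
variable {n r : ℕ}

/-- `a`'s block (for composition `f`) strictly precedes `b`'s block. -/
def blkLt (f : Fin n → ℕ) (a b : Fin r) : Prop :=
  ∃ k k' : Fin n, k.val < k'.val ∧ InBlock f k a ∧ InBlock f k' b

instance (f : Fin n → ℕ) (a b : Fin r) : Decidable (blkLt f a b) := by
  unfold blkLt; infer_instance

lemma block_ord {f : Fin n → ℕ} {k k' : Fin n} {x y : Fin r}
    (hx : InBlock f k x) (hy : InBlock f k' y) (h : k.val < k'.val) : x.val < y.val := by
  obtain ⟨h1, h2⟩ := hx
  obtain ⟨h1', h2'⟩ := hy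
  have := psum_mono f (show k.val + 1 ≤ k'.val from h)
  rw [psum_succ] at this
  omega

lemma blkLt_lt {f : Fin n → ℕ} {a b : Fin r} (h : blkLt f a b) : a < b := by
  obtain ⟨k, k', hkk, ha, hb⟩ := h
  rw [Fin.lt_def]
  exact block_ord ha hb hkk

/-- `d` is increasing on each block of `f`. -/
def IncOn (f : Fin n → ℕ) (d : Equiv.Perm (Fin r)) : Prop :=
  ∀ (k : Fin n) (a b : Fin r), InBlock f k a → InBlock f k b → a < b → d a < d b

lemma memYoung_one (f : Fin n → ℕ) : MemYoung f (1 : Equiv.Perm (Fin r)) :=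
  fun _ _ h => h

lemma memYoung_swap {f : Fin n → ℕ} {k₀ : Fin n} {a b : Fin r}
    (ha : InBlock f k₀ a) (hb : InBlock f k₀ b) : MemYoung f (Equiv.swap a b) := by
  intro k j hj
  by_cases hja : j = a
  · subst hja
    rw [Equiv.swap_apply_left]
    rw [block_unique hj ha]
    exact hb
  · by_cases hjb : j = b
    · subst hjb
      rw [Equiv.swap_apply_right]
      rw [block_unique hj hb]
      exact ha
    · rw [Equiv.swap_apply_of_ne_of_ne hja hjb]
      exact hj

lemma inBlock_perm_iff {f : Fin n → ℕ} (hs : ∑ i, f i = r) {σ : Equiv.Perm (Fin r)}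
    (hσ : MemYoung f σ) (k : Fin n) (x : Fin r) :
    InBlock f k (σ x) ↔ InBlock f k x := by
  constructor
  · intro h
    obtain ⟨k₀, hk₀⟩ := block_exists hs x
    have := hσ k₀ x hk₀
    rw [block_unique h this]
    exact hk₀
  · exact fun h => hσ k x h

lemma blkLt_perm_iff {f : Fin n → ℕ} (hs : ∑ i, f i = r) {σ : Equiv.Perm (Fin r)}
    (hσ : MemYoung f σ) (a b : Fin r) :
    blkLt f (σ a) (σ b) ↔ blkLt f a b := by
  unfold blkLt
  constructor
  · rintro ⟨k, k', h, h1, h2⟩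
    exact ⟨k, k', h, (inBlock_perm_iff hs hσ k a).mp h1, (inBlock_perm_iff hs hσ k' b).mp h2⟩
  · rintro ⟨k, k', h, h1, h2⟩
    exact ⟨k, k', h, (inBlock_perm_iff hs hσ k a).mpr h1, (inBlock_perm_iff hs hσ k' b).mpr h2⟩

/-- the set of "cross-block" inversion pairs -/
def Npairs (lam mu : Fin n → ℕ) (w : Equiv.Perm (Fin r)) : Finset (Fin r × Fin r) :=
  Finset.univ.filter fun p : Fin r × Fin r => blkLt mu p.1 p.2 ∧ blkLt lam (w p.2) (w p.1)

lemma npairs_le_len (lam mu : Fin n → ℕ) (w : Equiv.Perm (Fin r)) :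
    (Npairs lam mu w).card ≤ len w := by
  rw [len_def]
  apply Finset.card_le_card
  intro p hp
  rw [Npairs, Finset.mem_filter] at hp
  rw [Finset.mem_filter]
  exact ⟨Finset.mem_univ _, blkLt_lt hp.2.1, blkLt_lt hp.2.2⟩

lemma npairs_invariant {lam mu : Fin n → ℕ} (hl : ∑ i, lam i = r) (hm : ∑ i, mu i = r)
    {u σ d : Equiv.Perm (Fin r)} (hu : MemYoung lam u) (hσ : MemYoung mu σ) :
    (Npairs lam mu (u * d * σ)).card = (Npairs lam mu d).card := by
  symm
  have happ : ∀ x, (u * d * σ) (σ⁻¹ x) = u (d x) := by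
    intro x
    show u (d (σ (σ⁻¹ x))) = u (d x)
    rw [Equiv.Perm.apply_inv_self]
  apply Finset.card_nbij (i := fun p => (σ⁻¹ p.1, σ⁻¹ p.2))
  · intro p hp
    rw [Finset.mem_coe, Npairs, Finset.mem_filter] at hp ⊢
    obtain ⟨-, h1, h2⟩ := hp
    refine ⟨Finset.mem_univ _, ?_, ?_⟩
    · have h3 := blkLt_perm_iff hm hσ (σ⁻¹ p.1) (σ⁻¹ p.2)
      rw [Equiv.Perm.apply_inv_self, Equiv.Perm.apply_inv_self] at h3
      exact h3.mp h1
    · show blkLt lam ((u * d * σ) (σ⁻¹ p.2)) ((u * d * σ) (σ⁻¹ p.1))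
      rw [happ, happ]
      exact (blkLt_perm_iff hl hu _ _).mpr h2
  · intro a _ b _ hab
    have h1 : σ⁻¹ a.1 = σ⁻¹ b.1 := congrArg Prod.fst hab
    have h2 : σ⁻¹ a.2 = σ⁻¹ b.2 := congrArg Prod.snd hab
    exact Prod.ext (σ⁻¹.injective h1) (σ⁻¹.injective h2)
  · intro q hq
    simp only [Npairs, Finset.coe_filter, Set.mem_setOf_eq] at hq ⊢
    obtain ⟨-, h1, h2⟩ := hq
    refine ⟨(σ q.1, σ q.2), ⟨Finset.mem_univ _, ?_, ?_⟩, ?_⟩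
    · exact (blkLt_perm_iff hm hσ _ _).mpr h1
    · have h2' : blkLt lam (u (d (σ q.2))) (u (d (σ q.1))) := h2
      exact (blkLt_perm_iff hl hu _ _).mp h2'
    · show (σ⁻¹ (σ q.1), σ⁻¹ (σ q.2)) = q
      rw [Equiv.Perm.inv_apply_self, Equiv.Perm.inv_apply_self]

lemma len_le_npairs {lam mu : Fin n → ℕ} (hl : ∑ i, lam i = r) (hm : ∑ i, mu i = r)
    {d : Equiv.Perm (Fin r)} (h1 : IncOn mu d) (h2 : IncOn lam d⁻¹) :
    len d ≤ (Npairs lam mu d).card := by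
  rw [len_def]
  apply Finset.card_le_card
  intro p hp
  rw [Finset.mem_filter] at hp
  obtain ⟨-, hlt, hinv⟩ := hp
  rw [Npairs, Finset.mem_filter]
  refine ⟨Finset.mem_univ _, ?_, ?_⟩
  · obtain ⟨k1, hk1⟩ := block_exists hm p.1
    obtain ⟨k2, hk2⟩ := block_exists hm p.2
    refine ⟨k1, k2, ?_, hk1, hk2⟩
    rcases lt_trichotomy k1.val k2.val with h | h | h
    · exact h
    · exfalso
      have : k1 = k2 := Fin.ext h
      subst this
      exact absurd (h1 k1 p.1 p.2 hk1 hk2 hlt) (not_lt.mpr (le_of_lt hinv))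
    · exfalso
      have := block_ord hk2 hk1 h
      rw [Fin.lt_def] at hlt
      omega
  · obtain ⟨i1, hi1⟩ := block_exists hl (d p.1)
    obtain ⟨i2, hi2⟩ := block_exists hl (d p.2)
    refine ⟨i2, i1, ?_, hi2, hi1⟩
    rcases lt_trichotomy i2.val i1.val with h | h | h
    · exact h
    · exfalso
      have heq : i2 = i1 := Fin.ext h
      rw [heq] at hi2
      have := h2 i1 (d p.2) (d p.1) hi2 hi1 hinv
      rw [Equiv.Perm.inv_apply_self, Equiv.Perm.inv_apply_self] at this
      exact absurd this (not_lt.mpr (le_of_lt hlt))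
    · exfalso
      have := block_ord hi1 hi2 h
      rw [Fin.lt_def] at hinv
      omega

lemma minDouble_of_sorted {lam mu : Fin n → ℕ} (hl : ∑ i, lam i = r) (hm : ∑ i, mu i = r)
    {d : Equiv.Perm (Fin r)} (h1 : IncOn mu d) (h2 : IncOn lam d⁻¹) :
    MinDouble lam mu d := by
  intro u σ hu hσ
  calc len d ≤ (Npairs lam mu d).card := len_le_npairs hl hm h1 h2
    _ = (Npairs lam mu (u * d * σ)).card := (npairs_invariant hl hm hu hσ).symm
    _ ≤ len (u * d * σ) := npairs_le_len lam mu _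

lemma incOn_of_adj {f : Fin n → ℕ} {d : Equiv.Perm (Fin r)}
    (hadj : ∀ (k : Fin n) (a a' : Fin r), a.val + 1 = a'.val →
      InBlock f k a → InBlock f k a' → d a < d a') :
    IncOn f d := by
  intro k a b ha hb hab
  rw [Fin.lt_def] at hab
  have key : ∀ m : ℕ, ∀ a b : Fin r, InBlock f k a → InBlock f k b →
      a.val < b.val → b.val - a.val = m → d a < d b := by
    intro m
    induction m using Nat.strong_induction_on with
    | _ m IH =>
      intro a b ha hb hab hm
      by_cases h1 : a.val + 1 = b.val
      · exact hadj k a b h1 ha hb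
      · have hm1 : 1 < m := by omega
        have ha' : (⟨a.val + 1, by omega⟩ : Fin r).val < r := by omega
        set a' : Fin r := ⟨a.val + 1, by omega⟩ with ha'def
        have hblk : InBlock f k a' := by
          obtain ⟨g1, g2⟩ := ha
          obtain ⟨g1', g2'⟩ := hb
          constructor <;> simp only [ha'def] <;> omega
        have step1 : d a < d a' := hadj k a a' rfl ha hblk
        have step2 : d a' < d b := IH (m - 1) (by omega) a' b hblk hb (by simp [ha'def]; omega) (by simp [ha'def]; omega)
        exact lt_trans step1 step2
  exact key (b.val - a.val) a b ha hb hab rfl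

lemma sorted_of_minDouble {lam mu : Fin n → ℕ} (hl : ∑ i, lam i = r) (hm : ∑ i, mu i = r)
    {d : Equiv.Perm (Fin r)} (hd : MinDouble lam mu d) :
    IncOn mu d ∧ IncOn lam d⁻¹ := by
  constructor
  · apply incOn_of_adj
    intro k a a' hadj ha ha'
    rcases lt_trichotomy (d a) (d a') with h | h | h
    · exact h
    · exact absurd (d.injective h) (fun hc => by rw [hc] at hadj; omega)
    · exfalso
      have hmem : MemYoung mu (Equiv.swap a a') := memYoung_swap ha ha'
      have hmin := hd 1 (Equiv.swap a a') (memYoung_one lam) hmem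
      rw [one_mul] at hmin
      have := len_mul_swap_desc d hadj h
      omega
  · apply incOn_of_adj
    intro k c c' hadj hc hc'
    rcases lt_trichotomy (d⁻¹ c) (d⁻¹ c') with h | h | h
    · exact h
    · exact absurd (d⁻¹.injective h) (fun hcc => by rw [hcc] at hadj; omega)
    · exfalso
      have hmem : MemYoung lam (Equiv.swap c c') := memYoung_swap hc hc'
      have hmin := hd (Equiv.swap c c') 1 hmem (memYoung_one mu)
      rw [mul_one] at hmin
      have hlen : len (Equiv.swap c c' * d) = len (d⁻¹ * Equiv.swap c c') := by
        have h0 : (Equiv.swap c c' * d)⁻¹ = d⁻¹ * Equiv.swap c c' := by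
          rw [mul_inv_rev, Equiv.swap_inv]
        rw [← h0, len_inv]
      have := len_mul_swap_desc d⁻¹ hadj h
      rw [len_inv] at this
      omega

end MinD
end HCPaper

namespace HCPaper

section FKey
variable {n r : ℕ}

/-- the index of the block containing `y` -/
def blkIdx (f : Fin n → ℕ) (y : Fin r) : ℕ :=
  (Finset.univ.filter fun k : Fin n => psum f (k.val + 1) ≤ y.val).card

lemma blkIdx_eq {f : Fin n → ℕ} {k : Fin n} {y : Fin r} (h : InBlock f k y) :
    blkIdx f y = k.val := by
  unfold blkIdx
  have hfe : (Finset.univ.filter fun k' : Fin n => psum f (k'.val + 1) ≤ y.val) =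
      (Finset.univ.filter fun k' : Fin n => k'.val < k.val) := by
    apply Finset.filter_congr
    intro k' _
    obtain ⟨h1, h2⟩ := h
    constructor
    · intro hle
      by_contra hc
      push_neg at hc
      have := psum_mono f (show k.val + 1 ≤ k'.val + 1 by omega)
      rw [psum_succ] at this
      omega
    · intro hlt
      have := psum_mono f (show k'.val + 1 ≤ k.val from hlt)
      omega
  rw [hfe, card_val_lt k.val (le_of_lt k.isLt)]

lemma blockCard {f : Fin n → ℕ} (hs : ∑ i, f i = r) (k : Fin n) :
    (Finset.univ.filter fun x : Fin r => InBlock f k x).card = f k := by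
  have hle : psum f k.val + f k ≤ r := by
    have := psum_add_le f k
    omega
  have hIco : (Finset.Ico (psum f k.val) (psum f k.val + f k)).card = f k := by
    rw [Nat.card_Ico]
    omega
  rw [← hIco]
  apply Finset.card_nbij (i := fun z => z.val)
  · intro a ha
    rw [Finset.mem_coe, Finset.mem_filter] at ha
    rw [Finset.mem_coe, Finset.mem_Ico]
    exact ⟨ha.2.1, ha.2.2⟩
  · intro a _ b _ hab
    exact Fin.ext hab
  · intro b hb
    rw [Finset.coe_Ico, Set.mem_Ico] at hb
    refine ⟨⟨b, by omega⟩, ?_, rfl⟩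
    simp only [Finset.coe_filter, Set.mem_setOf_eq]
    exact ⟨Finset.mem_univ _, hb.1, hb.2⟩

lemma card_filter_comp_perm (w : Equiv.Perm (Fin r)) (P : Fin r → Prop) [DecidablePred P] :
    (Finset.univ.filter fun x => P (w x)).card = (Finset.univ.filter P).card := by
  apply Finset.card_nbij (i := fun x => w x)
  · intro a ha
    rw [Finset.mem_coe, Finset.mem_filter] at ha ⊢
    exact ⟨Finset.mem_univ _, ha.2⟩
  · intro a _ b _ hab
    exact w.injective hab
  · intro b hb
    simp only [Finset.coe_filter, Set.mem_setOf_eq] at hb ⊢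
    refine ⟨w⁻¹ b, ⟨Finset.mem_univ _, ?_⟩, ?_⟩
    · show P (w (w⁻¹ b))
      rw [Equiv.Perm.apply_inv_self]
      exact hb.2
    · exact Equiv.Perm.apply_inv_self w b

lemma card_filter_and_comm (P Q : Fin r → Prop) [DecidablePred P] [DecidablePred Q] :
    (Finset.univ.filter fun x => P x ∧ Q x).card =
    (Finset.univ.filter fun x => Q x ∧ P x).card := by
  congr 1
  apply Finset.filter_congr
  intro x _
  exact and_comm

/-- Key lemma: for a permutation increasing on the blocks of `mu`, with prescribed
intersection counts, the image of the `(i,j)` column segment lands in the `i`-th `lam` block. -/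
lemma sorted_block_image {lam mu : Fin n → ℕ} {M : Fin n → Fin n → ℕ}
    {d : Equiv.Perm (Fin r)} (hl : ∑ i, lam i = r) (hm : ∑ i, mu i = r)
    (hcol : ∀ j, ∑ i, M i j = mu j) (hinc : IncOn mu d)
    (hcnt : ∀ i j, (Finset.univ.filter fun z : Fin r =>
        InBlock mu j z ∧ InBlock lam i (d z)).card = M i j) :
    ∀ (i j : Fin n) (t : ℕ), t < M i j → ∀ x : Fin r,
      x.val = psum mu j.val + (psum (fun i' => M i' j) i.val + t) →
      InBlock lam i (d x) := by
  intro i j t ht x hx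
  have hble : psum (fun i' => M i' j) i.val + M i j ≤ mu j := by
    have := psum_add_le (fun i' => M i' j) i
    rw [hcol] at this
    exact this
  have hxB : InBlock mu j x := by constructor <;> omega
  have hcard : ∀ c : ℕ,
      (Finset.univ.filter fun z : Fin r => (InBlock mu j z ∧ blkIdx lam (d z) < c)).card =
      psum (fun i' => M i' j) c := by
    intro c
    rw [card_filter_parts (n := n) Finset.univ _ (fun i' z => InBlock lam i' (d z))
      (fun z _ hz => by
        obtain ⟨k, hk⟩ := block_exists hl (d z)
        exact ⟨k, hk, fun k' hk' => block_unique hk' hk⟩)]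
    unfold psum
    apply Finset.sum_congr rfl
    intro i' _
    by_cases hc : i'.val < c
    · rw [if_pos hc]
      show _ = M i' j
      rw [← hcnt i' j]
      congr 1
      apply Finset.filter_congr
      intro z _
      constructor
      · rintro ⟨⟨hz1, -⟩, hz2⟩
        exact ⟨hz1, hz2⟩
      · rintro ⟨hz1, hz2⟩
        exact ⟨⟨hz1, by rw [blkIdx_eq hz2]; exact hc⟩, hz2⟩
    · rw [if_neg hc]
      rw [Finset.card_eq_zero, Finset.filter_eq_empty_iff]
      rintro z _ ⟨⟨-, hz1⟩, hz2⟩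
      rw [blkIdx_eq hz2] at hz1
      omega
  have hdc : ∀ (c : ℕ) (z z' : Fin r), InBlock mu j z → InBlock mu j z' → z.val ≤ z'.val →
      (InBlock mu j z' ∧ blkIdx lam (d z') < c) → (InBlock mu j z ∧ blkIdx lam (d z) < c) := by
    intro c z z' hz hz' hle hmem
    refine ⟨hz, ?_⟩
    rcases eq_or_lt_of_le hle with heq | hlt
    · have : z = z' := Fin.ext heq
      rw [this]
      exact hmem.2
    · have hdz : d z < d z' := hinc j z z' hz hz' (by rw [Fin.lt_def]; exact hlt)
      obtain ⟨k1, hk1⟩ := block_exists hl (d z)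
      obtain ⟨k2, hk2⟩ := block_exists hl (d z')
      rw [blkIdx_eq hk1]
      have h2 := hmem.2
      rw [blkIdx_eq hk2] at h2
      rcases Nat.lt_or_ge k1.val k2.val with h | h
      · omega
      · rcases Nat.eq_or_lt_of_le h with h' | h'
        · omega
        · have := block_ord hk2 hk1 h'
          rw [Fin.lt_def] at hdz
          omega
  have hds : ∀ (c : ℕ) (x' : Fin r), InBlock mu j x' →
      ((InBlock mu j x' ∧ blkIdx lam (d x') < c) ↔
        x'.val < psum mu j.val + (Finset.univ.filter fun z : Fin r =>
          (InBlock mu j z ∧ blkIdx lam (d z) < c)).card) := by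
    intro c x' hx'
    constructor
    · intro hxD
      have hsubset : (Finset.univ.filter fun z : Fin r =>
          psum mu j.val ≤ z.val ∧ z.val < x'.val + 1) ⊆
          (Finset.univ.filter fun z : Fin r => (InBlock mu j z ∧ blkIdx lam (d z) < c)) := by
        intro z hzmem
        rw [Finset.mem_filter] at hzmem ⊢
        obtain ⟨-, hz1, hz2⟩ := hzmem
        have hzB : InBlock mu j z := ⟨hz1, by obtain ⟨g1, g2⟩ := hx'; omega⟩
        exact ⟨Finset.mem_univ _, hdc c z x' hzB hx' (by omega) hxD⟩
      have hc1 := card_val_interval (m := r) (psum mu j.val) (x'.val + 1) (by omega)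
      have hcle := Finset.card_le_card hsubset
      rw [hc1] at hcle
      obtain ⟨g1, g2⟩ := hx'
      omega
    · intro hlt
      by_contra hxD
      have hsubset : (Finset.univ.filter fun z : Fin r =>
          (InBlock mu j z ∧ blkIdx lam (d z) < c)) ⊆
          (Finset.univ.filter fun z : Fin r => psum mu j.val ≤ z.val ∧ z.val < x'.val) := by
        intro z hz
        rw [Finset.mem_filter] at hz ⊢
        have hzB : InBlock mu j z := hz.2.1
        refine ⟨Finset.mem_univ _, hzB.1, ?_⟩
        rcases Nat.lt_or_ge z.val x'.val with h | h
        · exact h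
        · exact absurd (hdc c x' z hx' hzB h hz.2) hxD
      have hc1 := card_val_interval (m := r) (psum mu j.val) x'.val (by omega)
      have hcle := Finset.card_le_card hsubset
      rw [hc1] at hcle
      obtain ⟨g1, g2⟩ := hx'
      omega
  have h1 : ¬ (InBlock mu j x ∧ blkIdx lam (d x) < i.val) := by
    intro hmem
    have := (hds i.val x hxB).mp hmem
    rw [hcard i.val] at this
    omega
  have h2 : InBlock mu j x ∧ blkIdx lam (d x) < i.val + 1 := by
    rw [hds (i.val + 1) x hxB, hcard (i.val + 1)]
    have hps := psum_succ (fun i' => M i' j) i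
    omega
  have hbi : blkIdx lam (d x) = i.val := by
    have hb2 := h2.2
    have hb1 : ¬ blkIdx lam (d x) < i.val := fun hc => h1 ⟨hxB, hc⟩
    omega
  obtain ⟨k, hk⟩ := block_exists hl (d x)
  rw [blkIdx_eq hk] at hbi
  have : k = i := Fin.ext hbi
  rw [← this]
  exact hk

end FKey
end HCPaper

namespace HCPaper

section FVal
variable {n r : ℕ}

/-- The key rigidity lemma: a doubly-sorted permutation with prescribed intersection counts
is given by an explicit value formula. -/
lemma sorted_match_val {lam mu : Fin n → ℕ} {M : Fin n → Fin n → ℕ}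
    {d : Equiv.Perm (Fin r)} (hl : ∑ i, lam i = r) (hm : ∑ i, mu i = r)
    (hrow : ∀ i, ∑ j, M i j = lam i) (hcol : ∀ j, ∑ i, M i j = mu j)
    (hinc1 : IncOn mu d) (hinc2 : IncOn lam d⁻¹)
    (hmatch : ∀ i j, (Finset.univ.filter fun x : Fin r =>
        InBlock lam i x ∧ InBlock mu j (d⁻¹ x)).card = M i j) :
    ∀ (i j : Fin n) (t : ℕ), t < M i j → ∀ x : Fin r,
      x.val = psum mu j.val + (psum (fun i' => M i' j) i.val + t) →
      (d x).val = psum lam i.val + (psum (fun j' => M i j') j.val + t) := by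
  -- counts in the two convenient forms
  have hcntd : ∀ i j : Fin n, (Finset.univ.filter fun z : Fin r =>
      InBlock mu j z ∧ InBlock lam i (d z)).card = M i j := by
    intro i j
    rw [← card_filter_perm d (InBlock lam i) (InBlock mu j)]
    exact hmatch i j
  have hF1 := sorted_block_image hl hm hcol hinc1 hcntd
  have hF2 := sorted_block_image (M := fun a b => M b a) hm hl
    (fun j => hrow j) (d := d⁻¹) hinc2 (fun i j => hmatch j i)
  intro i j t ht x hx
  have hble_col : psum (fun i' => M i' j) i.val + M i j ≤ mu j := by
    have := psum_add_le (fun i' => M i' j) i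
    rw [hcol] at this
    exact this
  have hble_row : psum (fun j' => M i j') j.val + M i j ≤ lam i := by
    have := psum_add_le (fun j' => M i j') j
    rw [hrow] at this
    exact this
  have hmu_le : psum mu j.val + mu j ≤ r := by
    have := psum_add_le mu j
    omega
  have hlam_le : psum lam i.val + lam i ≤ r := by
    have := psum_add_le lam i
    omega
  -- the target row segment
  set c := psum lam i.val + psum (fun j' => M i j') j.val with hc
  have hTcard : (Finset.univ.filter fun y : Fin r =>
      c ≤ y.val ∧ y.val < c + M i j).card = M i j := by
    rw [card_val_interval (m := r) c (c + M i j) (by omega)]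
    omega
  -- the two strictly monotone maps into the segment
  have hcolpf : ∀ s : Fin (M i j),
      psum mu j.val + (psum (fun i' => M i' j) i.val + s.val) < r := by
    intro s
    have := s.isLt
    omega
  set f : Fin (M i j) → Fin r := fun s => d ⟨_, hcolpf s⟩ with hf
  set g : Fin (M i j) → Fin r := fun s => ⟨c + s.val, by have := s.isLt; omega⟩ with hg
  have hmemcol : ∀ s : Fin (M i j), InBlock mu j (⟨_, hcolpf s⟩ : Fin r) := by
    intro s
    have hs := s.isLt
    constructor
    · show psum mu j.val ≤ psum mu j.val + (psum (fun i' => M i' j) i.val + s.val)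
      omega
    · show psum mu j.val + (psum (fun i' => M i' j) i.val + s.val) < psum mu j.val + mu j
      omega
  have hfmono : StrictMono f := by
    intro s s' hss
    rw [Fin.lt_def] at hss
    apply hinc1 j _ _ (hmemcol s) (hmemcol s')
    show (⟨_, hcolpf s⟩ : Fin r) < ⟨_, hcolpf s'⟩
    rw [Fin.mk_lt_mk]
    omega
  have hgmono : StrictMono g := by
    intro s s' hss
    rw [Fin.lt_def] at hss
    show (⟨c + s.val, _⟩ : Fin r) < ⟨c + s'.val, _⟩
    rw [Fin.mk_lt_mk]
    omega
  have hfT : ∀ s : Fin (M i j), f s ∈ Finset.univ.filter fun y : Fin r =>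
      c ≤ y.val ∧ y.val < c + M i j := by
    intro s
    have hbl : InBlock lam i (f s) := hF1 i j s.val s.isLt _ rfl
    obtain ⟨hb1, hb2⟩ := hbl
    have ho : (f s).val - psum lam i.val < ∑ j', M i j' := by
      rw [hrow]
      omega
    obtain ⟨j₀, t₀, ht₀, he⟩ := blockN ho
    have heta : psum (M i) j₀.val = psum (fun j' => M i j') j₀.val := rfl
    have hyval : (f s).val = psum lam i.val + (psum (fun j' => M i j') j₀.val + t₀) := by
      omega
    have hdy : InBlock mu j₀ (d⁻¹ (f s)) := hF2 j₀ i t₀ ht₀ (f s) hyval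
    have hdinv : d⁻¹ (f s) = ⟨_, hcolpf s⟩ := by
      rw [hf]
      exact Equiv.Perm.inv_apply_self d _
    rw [hdinv] at hdy
    have hj : j₀ = j := block_unique hdy (hmemcol s)
    rw [Finset.mem_filter]
    subst hj
    refine ⟨Finset.mem_univ _, by omega, by omega⟩
  have hgT : ∀ s : Fin (M i j), g s ∈ Finset.univ.filter fun y : Fin r =>
      c ≤ y.val ∧ y.val < c + M i j := by
    intro s
    rw [Finset.mem_filter]
    have hs := s.isLt
    refine ⟨Finset.mem_univ _, ?_, ?_⟩
    · show c ≤ c + s.val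
      omega
    · show c + s.val < c + M i j
      omega
  have hfg : f = g := by
    rw [Finset.orderEmbOfFin_unique hTcard hfT hfmono,
      Finset.orderEmbOfFin_unique hTcard hgT hgmono]
  have hxeq : x = ⟨_, hcolpf ⟨t, ht⟩⟩ := Fin.ext hx
  rw [hxeq]
  have hval : f ⟨t, ht⟩ = g ⟨t, ht⟩ := congrFun hfg _
  have hval2 : (f ⟨t, ht⟩).val = c + t := by rw [hval]
  have hval3 : (d (⟨_, hcolpf ⟨t, ht⟩⟩ : Fin r)).val = c + t := hval2
  omega

end FVal
end HCPaper

namespace HCPaper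

section FMain
variable {n r : ℕ}

lemma sorted_match_eq {lam mu : Fin n → ℕ} {M : Fin n → Fin n → ℕ}
    {d d' : Equiv.Perm (Fin r)} (hl : ∑ i, lam i = r) (hm : ∑ i, mu i = r)
    (hrow : ∀ i, ∑ j, M i j = lam i) (hcol : ∀ j, ∑ i, M i j = mu j)
    (hinc1 : IncOn mu d) (hinc2 : IncOn lam d⁻¹)
    (hmatch : ∀ i j, (Finset.univ.filter fun x : Fin r =>
        InBlock lam i x ∧ InBlock mu j (d⁻¹ x)).card = M i j)
    (hinc1' : IncOn mu d') (hinc2' : IncOn lam d'⁻¹)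
    (hmatch' : ∀ i j, (Finset.univ.filter fun x : Fin r =>
        InBlock lam i x ∧ InBlock mu j (d'⁻¹ x)).card = M i j) :
    d = d' := by
  apply Equiv.ext
  intro x
  obtain ⟨j, hj⟩ := block_exists hm x
  obtain ⟨hj1, hj2⟩ := hj
  have ho : x.val - psum mu j.val < ∑ i', M i' j := by
    rw [hcol]
    omega
  obtain ⟨i, t, ht, he⟩ := blockN ho
  have hx : x.val = psum mu j.val + (psum (fun i' => M i' j) i.val + t) := by omega
  have h1 := sorted_match_val hl hm hrow hcol hinc1 hinc2 hmatch i j t ht x hx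
  have h2 := sorted_match_val hl hm hrow hcol hinc1' hinc2' hmatch' i j t ht x hx
  exact Fin.ext (h1.trans h2.symm)

lemma exists_sorted_match {lam mu : Fin n → ℕ} {M : Fin n → Fin n → ℕ}
    (hl : ∑ i, lam i = r) (hm : ∑ i, mu i = r)
    (hrow : ∀ i, ∑ j, M i j = lam i) (hcol : ∀ j, ∑ i, M i j = mu j) :
    ∃ d : Equiv.Perm (Fin r), IncOn mu d ∧ IncOn lam d⁻¹ ∧
      ∀ i j, (Finset.univ.filter fun x : Fin r =>
        InBlock lam i x ∧ InBlock mu j (d⁻¹ x)).card = M i j := by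
  have hble_row : ∀ (i j : Fin n), psum (fun j' => M i j') j.val + M i j ≤ lam i := by
    intro i j
    have := psum_add_le (fun j' => M i j') j
    rw [hrow] at this
    exact this
  have hble_col : ∀ (i j : Fin n), psum (fun i' => M i' j) i.val + M i j ≤ mu j := by
    intro i j
    have := psum_add_le (fun i' => M i' j) i
    rw [hcol] at this
    exact this
  have hlam_le : ∀ i : Fin n, psum lam i.val + lam i ≤ r := by
    intro i
    have := psum_add_le lam i
    omega
  have hmu_le : ∀ j : Fin n, psum mu j.val + mu j ≤ r := by
    intro j
    have := psum_add_le mu j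
    omega
  have hrowpf : ∀ e : (p : Fin n × Fin n) × Fin (M p.1 p.2),
      psum lam e.1.1.val + (psum (fun j' => M e.1.1 j') e.1.2.val + e.2.val) < r := by
    rintro ⟨⟨i, j⟩, t⟩
    have h1 := hble_row i j
    have h2 := hlam_le i
    have h3 := t.isLt
    simp only at h3 ⊢
    omega
  have hcolpf : ∀ e : (p : Fin n × Fin n) × Fin (M p.1 p.2),
      psum mu e.1.2.val + (psum (fun i' => M i' e.1.2) e.1.1.val + e.2.val) < r := by
    rintro ⟨⟨i, j⟩, t⟩
    have h1 := hble_col i j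
    have h2 := hmu_le j
    have h3 := t.isLt
    simp only at h3 ⊢
    omega
  set rowF : ((p : Fin n × Fin n) × Fin (M p.1 p.2)) → Fin r :=
    fun e => ⟨_, hrowpf e⟩ with hrowF
  set colF : ((p : Fin n × Fin n) × Fin (M p.1 p.2)) → Fin r :=
    fun e => ⟨_, hcolpf e⟩ with hcolF
  have hrowinj : Function.Injective rowF := by
    rintro ⟨⟨i, j⟩, t⟩ ⟨⟨i', j'⟩, t'⟩ h
    have hval : psum lam i.val + (psum (fun j'' => M i j'') j.val + t.val) =
        psum lam i'.val + (psum (fun j'' => M i' j'') j'.val + t'.val) := congrArg Fin.val h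
    have hb : psum (fun j'' => M i j'') j.val + t.val < lam i := by
      have := hble_row i j
      have := t.isLt
      simp only at *
      omega
    have hb' : psum (fun j'' => M i' j'') j'.val + t'.val < lam i' := by
      have := hble_row i' j'
      have := t'.isLt
      simp only at *
      omega
    obtain ⟨hii, hst⟩ := posInj lam hb hb' hval
    cases hii
    obtain ⟨hjj, htt⟩ := posInj (fun j'' => M i j'') t.isLt t'.isLt hst
    cases hjj
    exact congrArg (Sigma.mk (i, j)) (Fin.ext htt)
  have hcolinj : Function.Injective colF := by
    rintro ⟨⟨i, j⟩, t⟩ ⟨⟨i', j'⟩, t'⟩ h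
    have hval : psum mu j.val + (psum (fun i'' => M i'' j) i.val + t.val) =
        psum mu j'.val + (psum (fun i'' => M i'' j') i'.val + t'.val) := congrArg Fin.val h
    have hb : psum (fun i'' => M i'' j) i.val + t.val < mu j := by
      have := hble_col i j
      have := t.isLt
      simp only at *
      omega
    have hb' : psum (fun i'' => M i'' j') i'.val + t'.val < mu j' := by
      have := hble_col i' j'
      have := t'.isLt
      simp only at *
      omega
    obtain ⟨hjj, hst⟩ := posInj mu hb hb' hval
    cases hjj
    obtain ⟨hii, htt⟩ := posInj (fun i'' => M i'' j) t.isLt t'.isLt hst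
    cases hii
    exact congrArg (Sigma.mk (i, j)) (Fin.ext htt)
  have hcardT : Fintype.card ((p : Fin n × Fin n) × Fin (M p.1 p.2)) = r := by
    simp only [Fintype.card_sigma, Fintype.card_fin]
    rw [Fintype.sum_prod_type]
    have h1 : ∀ i : Fin n, (∑ j, M i j) = lam i := hrow
    calc (∑ i : Fin n, ∑ j : Fin n, M i j) = ∑ i : Fin n, lam i :=
          Finset.sum_congr rfl (fun i _ => h1 i)
      _ = r := hl
  have hrowbij : Function.Bijective rowF :=
    (Fintype.bijective_iff_injective_and_card rowF).mpr
      ⟨hrowinj, by rw [hcardT, Fintype.card_fin]⟩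
  have hcolbij : Function.Bijective colF :=
    (Fintype.bijective_iff_injective_and_card colF).mpr
      ⟨hcolinj, by rw [hcardT, Fintype.card_fin]⟩
  set rowE := Equiv.ofBijective rowF hrowbij with hrowE
  set colE := Equiv.ofBijective colF hcolbij with hcolE
  set d : Equiv.Perm (Fin r) := colE.symm.trans rowE with hd
  have hkey : ∀ (i j : Fin n) (t : ℕ) (ht : t < M i j) (x : Fin r),
      x.val = psum mu j.val + (psum (fun i' => M i' j) i.val + t) →
      d x = rowF ⟨(i, j), ⟨t, ht⟩⟩ := by
    intro i j t ht x hx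
    have hxe : x = colF ⟨(i, j), ⟨t, ht⟩⟩ := Fin.ext hx
    rw [hxe]
    show rowE (colE.symm (colE ⟨(i, j), ⟨t, ht⟩⟩)) = rowF ⟨(i, j), ⟨t, ht⟩⟩
    rw [Equiv.symm_apply_apply]
    rfl
  have hkey' : ∀ (i j : Fin n) (t : ℕ) (ht : t < M i j) (x : Fin r),
      x.val = psum lam i.val + (psum (fun j' => M i j') j.val + t) →
      d⁻¹ x = colF ⟨(i, j), ⟨t, ht⟩⟩ := by
    intro i j t ht x hx
    have h1 : d (colF ⟨(i, j), ⟨t, ht⟩⟩) = x := by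
      rw [hkey i j t ht (colF ⟨(i, j), ⟨t, ht⟩⟩) rfl]
      exact (Fin.ext hx).symm
    rw [← h1, Equiv.Perm.inv_apply_self]
  have hmemrowF : ∀ e, InBlock lam e.1.1 (rowF e) := by
    rintro ⟨⟨i, j⟩, t⟩
    have h1 := hble_row i j
    have h3 := t.isLt
    simp only at h3
    constructor
    · show psum lam i.val ≤ psum lam i.val + (psum (fun j' => M i j') j.val + t.val)
      omega
    · show psum lam i.val + (psum (fun j' => M i j') j.val + t.val) < psum lam i.val + lam i
      omega
  have hmemcolF : ∀ e, InBlock mu e.1.2 (colF e) := by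
    rintro ⟨⟨i, j⟩, t⟩
    have h1 := hble_col i j
    have h3 := t.isLt
    simp only at h3
    constructor
    · show psum mu j.val ≤ psum mu j.val + (psum (fun i' => M i' j) i.val + t.val)
      omega
    · show psum mu j.val + (psum (fun i' => M i' j) i.val + t.val) < psum mu j.val + mu j
      omega
  refine ⟨d, ?_, ?_, ?_⟩
  · -- IncOn mu d
    intro k a b ha hb hab
    obtain ⟨ha1, ha2⟩ := ha
    obtain ⟨hb1, hb2⟩ := hb
    have hoa : a.val - psum mu k.val < ∑ i', M i' k := by rw [hcol]; omega
    have hob : b.val - psum mu k.val < ∑ i', M i' k := by rw [hcol]; omega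
    obtain ⟨ia, ta, hta, hea⟩ := blockN hoa
    obtain ⟨ib, tb, htb, heb⟩ := blockN hob
    have hxa : a.val = psum mu k.val + (psum (fun i' => M i' k) ia.val + ta) := by omega
    have hxb : b.val = psum mu k.val + (psum (fun i' => M i' k) ib.val + tb) := by omega
    have hda := hkey ia k ta hta a hxa
    have hdb := hkey ib k tb htb b hxb
    have hdaval : (d a).val = psum lam ia.val + (psum (fun j' => M ia j') k.val + ta) := by
      rw [hda]
    have hdbval : (d b).val = psum lam ib.val + (psum (fun j' => M ib j') k.val + tb) := by
      rw [hdb]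
    rw [Fin.lt_def] at hab ⊢
    have hkey2 : psum (fun i' => M i' k) ia.val + ta < psum (fun i' => M i' k) ib.val + tb := by
      omega
    rcases posKey (fun i' => M i' k) hta htb hkey2 with hcase | ⟨hcase, hcase2⟩
    · have g1 : psum (fun j' => M ia j') k.val + ta < lam ia := by
        have := hble_row ia k
        omega
      have g2 := psum_succ lam ia
      have g3 := psum_mono lam (show ia.val + 1 ≤ ib.val from hcase)
      omega
    · cases hcase
      omega
  · -- IncOn lam d⁻¹
    intro k a b ha hb hab
    obtain ⟨ha1, ha2⟩ := ha
    obtain ⟨hb1, hb2⟩ := hb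
    have hoa : a.val - psum lam k.val < ∑ j', M k j' := by rw [hrow]; omega
    have hob : b.val - psum lam k.val < ∑ j', M k j' := by rw [hrow]; omega
    obtain ⟨ja, ta, hta, hea⟩ := blockN hoa
    obtain ⟨jb, tb, htb, heb⟩ := blockN hob
    have heta : psum (M k) ja.val = psum (fun j' => M k j') ja.val := rfl
    have hetb : psum (M k) jb.val = psum (fun j' => M k j') jb.val := rfl
    have hxa : a.val = psum lam k.val + (psum (fun j' => M k j') ja.val + ta) := by omega
    have hxb : b.val = psum lam k.val + (psum (fun j' => M k j') jb.val + tb) := by omega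
    have hda := hkey' k ja ta hta a hxa
    have hdb := hkey' k jb tb htb b hxb
    have hdaval : (d⁻¹ a).val = psum mu ja.val + (psum (fun i' => M i' ja) k.val + ta) := by
      rw [hda]
    have hdbval : (d⁻¹ b).val = psum mu jb.val + (psum (fun i' => M i' jb) k.val + tb) := by
      rw [hdb]
    rw [Fin.lt_def] at hab ⊢
    have hkey2 : psum (fun j' => M k j') ja.val + ta < psum (fun j' => M k j') jb.val + tb := by
      omega
    rcases posKey (fun j' => M k j') hta htb hkey2 with hcase | ⟨hcase, hcase2⟩
    · have g1 : psum (fun i' => M i' ja) k.val + ta < mu ja := by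
        have := hble_col k ja
        omega
      have g2 := psum_succ mu ja
      have g3 := psum_mono mu (show ja.val + 1 ≤ jb.val from hcase)
      omega
    · cases hcase
      omega
  · -- the matching counts
    intro i j
    have hflt : (Finset.univ.filter fun x : Fin r =>
        InBlock lam i x ∧ InBlock mu j (d⁻¹ x)) =
        (Finset.univ.filter fun x : Fin r =>
          psum lam i.val + psum (fun j' => M i j') j.val ≤ x.val ∧
          x.val < psum lam i.val + psum (fun j' => M i j') j.val + M i j) := by
      apply Finset.filter_congr
      intro x _
      constructor
      · rintro ⟨h1, h2⟩
        obtain ⟨g1, g2⟩ := h1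
        have ho : x.val - psum lam i.val < ∑ j', M i j' := by rw [hrow]; omega
        obtain ⟨j₀, t₀, ht₀, he⟩ := blockN ho
        have heta : psum (M i) j₀.val = psum (fun j' => M i j') j₀.val := rfl
        have hx : x.val = psum lam i.val + (psum (fun j' => M i j') j₀.val + t₀) := by omega
        have hdx := hkey' i j₀ t₀ ht₀ x hx
        have hblk : InBlock mu j₀ (d⁻¹ x) := by
          rw [hdx]
          exact hmemcolF ⟨(i, j₀), ⟨t₀, ht₀⟩⟩
        have hj : j = j₀ := block_unique h2 hblk
        cases hj
        constructor <;> omega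
      · rintro ⟨h1, h2⟩
        have ht : x.val - (psum lam i.val + psum (fun j' => M i j') j.val) < M i j := by omega
        have hx : x.val = psum lam i.val + (psum (fun j' => M i j') j.val +
            (x.val - (psum lam i.val + psum (fun j' => M i j') j.val))) := by omega
        have hdx := hkey' i j _ ht x hx
        constructor
        · have g1 := hble_row i j
          constructor <;> omega
        · rw [hdx]
          exact hmemcolF ⟨(i, j), ⟨_, ht⟩⟩
    rw [hflt, card_val_interval (m := r) _ _ (by
      have := hble_row i j
      have := hlam_le i
      omega)]
    omega

end FMain
end HCPaper

open HCPaper in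
/-- `M ↦ (ro(M), d_M, co(M))` is a bijection from `n×n` matrices with entries summing to `r`
onto triples `(λ, d, μ)` with `λ, μ ∈ Λ(n,r)` and `d` a minimal length
`(S_λ, S_μ)`-double coset representative, where `d_M` is the unique representative with
`|R_i^{ro(M)} ∩ d_M(R_j^{co(M)})| = m_{ij}`. -/
theorem stmt18 (n r : ℕ) :
    (∀ M : Fin n → Fin n → ℕ, (∑ i, ∑ j, M i j) = r →
      ∃! d : Equiv.Perm (Fin r), MinDouble (rowSums M) (colSums M) d ∧ MatchMat M d) ∧
    (∀ (lam mu : Fin n → ℕ) (d : Equiv.Perm (Fin r)),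
      (∑ i, lam i) = r → (∑ i, mu i) = r → MinDouble lam mu d →
      ∃! M : Fin n → Fin n → ℕ,
        (∑ i, ∑ j, M i j) = r ∧ rowSums M = lam ∧ colSums M = mu ∧ MatchMat M d) := by
  
  constructor
  · -- part 1: matrices ↦ unique minimal double coset representative
    intro M hsum
    have hl : ∑ i, rowSums M i = r := hsum
    have hm : ∑ j, colSums M j = r := by
      show (∑ j, ∑ i, M i j) = r
      rw [Finset.sum_comm]
      exact hsum
    have hrow : ∀ i, ∑ j, M i j = rowSums M i := fun i => rfl
    have hcol : ∀ j, ∑ i, M i j = colSums M j := fun j => rfl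
    obtain ⟨d₀, h1, h2, h3⟩ := exists_sorted_match hl hm hrow hcol
    refine ⟨d₀, ⟨minDouble_of_sorted hl hm h1 h2, h3⟩, ?_⟩
    rintro d ⟨hdmin, hdmatch⟩
    obtain ⟨g1, g2⟩ := sorted_of_minDouble hl hm hdmin
    exact sorted_match_eq hl hm hrow hcol g1 g2 hdmatch h1 h2 h3
  · -- part 2: (λ, d, μ) ↦ unique matrix
    intro lam mu d hl hm _hd
    set N : Fin n → Fin n → ℕ := fun i j => (Finset.univ.filter fun x : Fin r =>
      InBlock lam i x ∧ InBlock mu j (d⁻¹ x)).card with hN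
    have hrS : rowSums N = lam := by
      funext i
      show (∑ j, (Finset.univ.filter fun x : Fin r =>
        InBlock lam i x ∧ InBlock mu j (d⁻¹ x)).card) = lam i
      rw [← card_filter_parts Finset.univ (fun x : Fin r => InBlock lam i x)
        (fun j x => InBlock mu j (d⁻¹ x)) (fun x _ hx => by
          obtain ⟨k, hk⟩ := block_exists hm (d⁻¹ x)
          exact ⟨k, hk, fun k' h' => block_unique h' hk⟩)]
      exact blockCard hl i
    have hcS : colSums N = mu := by
      funext j
      show (∑ i, (Finset.univ.filter fun x : Fin r =>
        InBlock lam i x ∧ InBlock mu j (d⁻¹ x)).card) = mu j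
      have hsw : ∀ i : Fin n, (Finset.univ.filter fun x : Fin r =>
          InBlock lam i x ∧ InBlock mu j (d⁻¹ x)).card =
          (Finset.univ.filter fun x : Fin r =>
          InBlock mu j (d⁻¹ x) ∧ InBlock lam i x).card :=
        fun i => card_filter_and_comm _ _
      rw [Finset.sum_congr rfl (fun i _ => hsw i)]
      rw [← card_filter_parts Finset.univ (fun x : Fin r => InBlock mu j (d⁻¹ x))
        (fun i x => InBlock lam i x) (fun x _ _ => by
          obtain ⟨k, hk⟩ := block_exists hl x
          exact ⟨k, hk, fun k' h' => block_unique h' hk⟩)]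
      rw [card_filter_comp_perm d⁻¹ (fun x => InBlock mu j x)]
      exact blockCard hm j
    refine ⟨N, ⟨?_, hrS, hcS, ?_⟩, ?_⟩
    · -- total sum
      calc (∑ i, ∑ j, N i j) = ∑ i, lam i :=
            Finset.sum_congr rfl (fun i _ => congrFun hrS i)
        _ = r := hl
    · -- MatchMat
      intro i j
      rw [hrS, hcS]
    · rintro M' ⟨_, hr', hc', hm'⟩
      funext i j
      have := hm' i j
      rw [hr', hc'] at this
      rw [hN]
      exact this.symm
end
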